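/- The abelianization of G is generated by the images of x₀, x₁ and y₁₀; the abelianization of yG is generated by the images of y₀, x₁ and y₁₀; the abelianization of G_y is generated by the images of x₀, y₁ and y₁₀; and the abelianization of yGy is generated by the images of y₀, y₁ and y₁₀. -/

import Mathlib

namespace LodhaMoore

/-- Infinite binary sequences `2^ℕ`. -/
abbrev Seq : Type := ℕ → Bool

/-- The underlying function of the basic bijection `x`:
`00η ↦ 0η`, `01η ↦ 10η`, `1η ↦ 11η` (reading `false` as `0` and `true` as `1`). -/
def xFun (ξ : Seq) : Seq := fun n =>
  if ξ 0 then
    match n with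
    | 0 => true
    | 1 => true
    | n+2 => ξ (n+1)
  else if ξ 1 then
    match n with
    | 0 => true
    | 1 => false
    | n+2 => ξ (n+2)
  else
    match n with
    | 0 => false
    | n+1 => ξ (n+2)

/-- The inverse of `xFun`: `0η ↦ 00η`, `10η ↦ 01η`, `11η ↦ 1η`. -/
def xInv (ξ : Seq) : Seq := fun n =>
  if ξ 0 then
    if ξ 1 then
      match n with
      | 0 => true
      | n+1 => ξ (n+2)
    else
      match n with
      | 0 => false
      | 1 => true
      | n+2 => ξ (n+2)
  else
    match n with
    | 0 => false
    | 1 => false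
    | n+2 => ξ (n+1)

/-- `yAux true n ξ` is the `n`-th bit of `ξ.y`, and `yAux false n ξ` is the `n`-th bit of
`ξ.y⁻¹`, where `y` is defined by `00η ↦ 0(η.y)`, `01η ↦ 10(η.y⁻¹)`, `1η ↦ 11(η.y)`,
so `y⁻¹` is given by `0η ↦ 00(η.y⁻¹)`, `10η ↦ 01(η.y)`, `11η ↦ 1(η.y⁻¹)`. -/
def yAux : Bool → ℕ → Seq → Bool
  | true, 0, ξ => if ξ 0 then true else if ξ 1 then true else false
  | true, 1, ξ => if ξ 0 then true else if ξ 1 then false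
      else yAux true 0 (fun k => ξ (k+2))
  | true, n+2, ξ =>
      if ξ 0 then yAux true n (fun k => ξ (k+1))
      else if ξ 1 then yAux false n (fun k => ξ (k+2))
      else yAux true (n+1) (fun k => ξ (k+2))
  | false, 0, ξ => if ξ 0 then (if ξ 1 then true else false) else false
  | false, 1, ξ => if ξ 0 then (if ξ 1 then yAux false 0 (fun k => ξ (k+2)) else true)
      else false
  | false, n+2, ξ =>
      if ξ 0 then
        (if ξ 1 then yAux false (n+1) (fun k => ξ (k+2))
         else yAux true n (fun k => ξ (k+2)))
      else yAux false n (fun k => ξ (k+1))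

lemma yAux_inv (n : ℕ) :
    ∀ ξ : Seq, (yAux false n (fun k => yAux true k ξ) = ξ n) ∧
      (yAux true n (fun k => yAux false k ξ) = ξ n) := by
  induction n using Nat.strong_induction_on with
  | _ n IH =>
    intro ξ
    constructor
    · cases h0 : ξ 0 <;> cases h1 : ξ 1 <;> rcases n with _ | _ | n <;>
        simp [yAux, h0, h1]
      · have e : (fun k => yAux true (k+1) ξ) = fun k => yAux true k (fun j => ξ (j+2)) :=
          funext fun k => by cases k <;> simp [yAux, h0, h1]
        rw [e]; exact (IH n (by omega) _).1
      · exact (IH n (by omega) _).2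
      · intro h2 h3; simp_all
      · exact (IH (n+1) (by omega) _).1
      · exact (IH (n+1) (by omega) _).1
    · cases h0 : ξ 0 <;> cases h1 : ξ 1 <;> rcases n with _ | _ | n <;>
        simp [yAux, h0, h1]
      · exact (IH (n+1) (by omega) _).2
      · cases h2 : ξ 2 <;> simp [h2]
      · exact (IH (n+1) (by omega) _).2
      · exact (IH n (by omega) _).1
      · have e : (fun k => yAux false (k+1) ξ) = fun k => yAux false k (fun j => ξ (j+2)) :=
          funext fun k => by cases k <;> simp [yAux, h0, h1]
        rw [e]; exact (IH n (by omega) _).2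

/-- The basic bijection `x` of `2^ℕ`. -/
def xPerm : Equiv.Perm Seq where
  toFun := xFun
  invFun := xInv
  left_inv := by
    intro ξ
    funext n
    cases h0 : ξ 0 <;> cases h1 : ξ 1 <;>
      rcases n with _ | _ | n <;>
      simp [xFun, xInv, h0, h1]
  right_inv := by
    intro ξ
    funext n
    cases h0 : ξ 0 <;> cases h1 : ξ 1 <;>
      rcases n with _ | _ | n <;>
      simp [xFun, xInv, h0, h1]

/-- The basic bijection `y` of `2^ℕ`. -/
def yPerm : Equiv.Perm Seq where
  toFun ξ := fun n => yAux true n ξ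
  invFun ξ := fun n => yAux false n ξ
  left_inv ξ := funext fun n => (yAux_inv n ξ).1
  right_inv ξ := funext fun n => (yAux_inv n ξ).2

/-- Prepend a finite word to an infinite sequence. -/
def append (s : List Bool) (ξ : Seq) : Seq := fun n =>
  if h : n < s.length then s.get ⟨n, h⟩ else ξ (n - s.length)

/-- Drop the first `k` letters of an infinite sequence. -/
def dropN (k : ℕ) (ξ : Seq) : Seq := fun n => ξ (n + k)

/-- `hasPrefix s ξ` iff the finite word `s` is a prefix of `ξ`. -/
def hasPrefix (s : List Bool) (ξ : Seq) : Prop := ∀ i : Fin s.length, ξ i = s.get i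

instance (s : List Bool) (ξ : Seq) : Decidable (hasPrefix s ξ) := by
  unfold hasPrefix; infer_instance

lemma hasPrefix_append (s : List Bool) (ξ : Seq) : hasPrefix s (append s ξ) := by
  intro i
  simp [append, i.isLt]

lemma dropN_append (s : List Bool) (ξ : Seq) : dropN s.length (append s ξ) = ξ := by
  funext n
  simp [dropN, append, Nat.not_lt.2 (Nat.le_add_left _ _)]

lemma append_dropN {s : List Bool} {ξ : Seq} (h : hasPrefix s ξ) :
    append s (dropN s.length ξ) = ξ := by
  funext n
  by_cases h' : n < s.length
  · simpa [append, h'] using (h ⟨n, h'⟩).symm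
  · simp [append, h', dropN, Nat.sub_add_cancel (Nat.le_of_not_lt h')]

/-- The bijection of `2^ℕ` acting as the bijection `f` "at the address `s`":
`sη ↦ s(η.f)`, and `ξ ↦ ξ` if `s` is not a prefix of `ξ`. -/
def localize (s : List Bool) (f : Equiv.Perm Seq) : Equiv.Perm Seq where
  toFun ξ := if hasPrefix s ξ then append s (f (dropN s.length ξ)) else ξ
  invFun ξ := if hasPrefix s ξ then append s (f.symm (dropN s.length ξ)) else ξ
  left_inv := by
    intro ξ
    by_cases h : hasPrefix s ξ
    · simp [h, hasPrefix_append, dropN_append, append_dropN h]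
    · simp [h]
  right_inv := by
    intro ξ
    by_cases h : hasPrefix s ξ
    · simp [h, hasPrefix_append, dropN_append, append_dropN h]
    · simp [h]

/-- The group of bijections of `2^ℕ`.  Composition is written so that in a product `g * h`
the factor `g` acts first: bijections act on the right, as in Lodha--Moore's paper. -/
abbrev M : Type := (Equiv.Perm Seq)ᵐᵒᵖ

/-- The generator `x_s`, `s ∈ 2^{<ℕ}` (a finite binary sequence, i.e. a `List Bool`). -/
def px (s : List Bool) : M := MulOpposite.op (localize s xPerm)

/-- The generator `y_s`, `s ∈ 2^{<ℕ}`. -/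
def py (s : List Bool) : M := MulOpposite.op (localize s yPerm)

/-- `t` is a word of the form `0^n`, `n ≥ 0`. -/
def allFalse (t : List Bool) : Prop := ∀ b ∈ t, b = false

/-- `t` is a word of the form `1^n`, `n ≥ 0`. -/
def allTrue (t : List Bool) : Prop := ∀ b ∈ t, b = true

instance (t : List Bool) : Decidable (allFalse t) := by unfold allFalse; infer_instance
instance (t : List Bool) : Decidable (allTrue t) := by unfold allTrue; infer_instance

/-- Addresses allowed for the `y`-generators of the Lodha–Moore group `G`. -/
def gSet : Set (List Bool) := {t | ¬ allFalse t ∧ ¬ allTrue t}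
/-- Addresses allowed for the `y`-generators of the Lodha–Moore group `G_y`. -/
def gySet : Set (List Bool) := {t | ¬ allFalse t}
/-- Addresses allowed for the `y`-generators of the Lodha–Moore group `yG`. -/
def ygSet : Set (List Bool) := {t | ¬ allTrue t}
/-- Addresses allowed for the `y`-generators of the Lodha–Moore group `yGy`. -/
def ygySet : Set (List Bool) := Set.univ

/-- The Lodha–Moore style group with `y`-generators allowed at the addresses in `A`. -/
def LM (A : Set (List Bool)) : Subgroup M :=
  Subgroup.closure (Set.range px ∪ py '' A)

/-- The Lodha–Moore group `G`. -/
def G : Subgroup M := LM gSet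
/-- The Lodha–Moore group `G_y`. -/
def Gy : Subgroup M := LM gySet
/-- The Lodha–Moore group `yG`. -/
def yG : Subgroup M := LM ygSet
/-- The Lodha–Moore group `yGy`. -/
def yGy : Subgroup M := LM ygySet

/-- The semi-deferred subgroup `H(s)` of the Lodha–Moore group `H = LM A`: the subgroup
generated by those generators of `H` whose address has `s` as a prefix. -/
def LMdef (A : Set (List Bool)) (s : List Bool) : Subgroup M :=
  Subgroup.closure ((px '' {t | s <+: t}) ∪ (py '' {t | t ∈ A ∧ s <+: t}))

lemma px_mem (A : Set (List Bool)) (s : List Bool) : px s ∈ LM A :=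
  Subgroup.subset_closure (Or.inl ⟨s, rfl⟩)

lemma py_mem {A : Set (List Bool)} {s : List Bool} (h : s ∈ A) : py s ∈ LM A :=
  Subgroup.subset_closure (Or.inr ⟨s, h, rfl⟩)

lemma px_mem_def (A : Set (List Bool)) {s t : List Bool} (h : s <+: t) :
    px t ∈ LMdef A s :=
  Subgroup.subset_closure (Or.inl ⟨t, h, rfl⟩)

lemma py_mem_def {A : Set (List Bool)} {s t : List Bool} (h1 : t ∈ A) (h2 : s <+: t) :
    py t ∈ LMdef A s :=
  Subgroup.subset_closure (Or.inr ⟨t, ⟨h1, h2⟩, rfl⟩)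

/-- The conjugate subgroup `z B z⁻¹`. -/
def conjSubgroup {H : Type*} [Group H] (z : H) (B : Subgroup H) : Subgroup H :=
  B.map (MulAut.conj z).toMonoidHom

/-- The `MulEquiv` `φ.range ≃* ⊤` used to define an ascending HNN extension. -/
noncomputable def ascEquiv {B : Type*} [Group B] (φ : B →* B) (hφ : Function.Injective φ) :
    (φ.range : Subgroup B) ≃* (⊤ : Subgroup B) :=
  (MonoidHom.ofInjective hφ).symm.trans Subgroup.topEquiv.symm

/-- The ascending HNN extension `B*_{φ,t} = ⟨B, t ∣ t⁻¹ b t = φ(b) for all b ∈ B⟩` of the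
group `B` along the injective endomorphism `φ`.  (In `HNNExtension B φ.range ⊤ (ascEquiv φ hφ)`
the defining relation is exactly `t⁻¹ * of b * t = of (φ b)` for all `b : B`.) -/
noncomputable abbrev AscHNN {B : Type*} [Group B] (φ : B →* B)
    (hφ : Function.Injective φ) : Type _ :=
  HNNExtension B φ.range ⊤ (ascEquiv φ hφ)


lemma mem10_g : [true, false] ∈ gSet := ⟨by decide, by decide⟩
lemma mem110_g : [true, true, false] ∈ gSet := ⟨by decide, by decide⟩
lemma mem10_gy : [true, false] ∈ gySet := show ¬ allFalse _ by decide
lemma mem10_yg : [true, false] ∈ ygSet := show ¬ allTrue _ by decide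
lemma mem0_yg : [false] ∈ ygSet := show ¬ allTrue _ by decide
lemma mem1_gy : [true] ∈ gySet := show ¬ allFalse _ by decide
lemma mem_ygy (t : List Bool) : t ∈ ygySet := Set.mem_univ t


/-!
Conjugation by `x_p` carries the cone at `p00u` onto the cone at `p0u`, the cone at `p01u` onto
the cone at `p10u`, and the cone at `p1u` onto the cone at `p11u`. So modulo any subgroup
normalized by all `x_p`, the class of `x_s` (or of `y_s`) depends only on whether `s` is empty,
a nonempty power of `0`, a nonempty power of `1`, or contains both letters. The splitting
relation `y_s = x_s y_{s0} y_{s10}⁻¹ y_{s11}` then yields `x₁₀` from `y₁₀`, `x₀` from `y₀` and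
`x₁` from `y₁`, and `y` from `x`, `y₀`, `y₁`, `y₁₀`; the Thompson relation `x₀ x x₁ = x x`
gives `x = (x⁻¹ x₀ x) x₁`. The preimage of any subgroup of the abelianization is
normalized by the whole group, which gives the four generating sets.
-/

@[simp] lemma append_nil (ξ : Seq) : append [] ξ = ξ := by
  funext n; simp [append]

@[simp] lemma append_cons_zero (b : Bool) (s : List Bool) (ξ : Seq) :
    append (b :: s) ξ 0 = b := by
  simp [append]

@[simp] lemma append_cons_succ (b : Bool) (s : List Bool) (ξ : Seq) (n : ℕ) :
    append (b :: s) ξ (n + 1) = append s ξ n := by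
  by_cases h : n < s.length <;> simp [append, h]

@[simp] lemma append_append (s t : List Bool) (ξ : Seq) :
    append s (append t ξ) = append (s ++ t) ξ := by
  induction s with
  | nil => simp
  | cons b s ih => funext n; cases n <;> simp [← ih]

lemma append_injective (s : List Bool) : Function.Injective (append s) := fun ζ ζ' h => by
  rw [← dropN_append s ζ, h, dropN_append]

lemma hasPrefix_iff (s : List Bool) (ξ : Seq) : hasPrefix s ξ ↔ ∃ ζ, ξ = append s ζ :=
  ⟨fun h => ⟨_, (append_dropN h).symm⟩, by rintro ⟨ζ, rfl⟩; exact hasPrefix_append s ζ⟩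

lemma hasPrefix_append_append_iff (s t : List Bool) (ζ : Seq) :
    hasPrefix (s ++ t) (append s ζ) ↔ hasPrefix t ζ := by
  simp only [hasPrefix_iff, ← append_append, (append_injective s).eq_iff]

lemma hasPrefix.of_append {s t : List Bool} {ξ : Seq} (h : hasPrefix (s ++ t) ξ) :
    hasPrefix s ξ := by
  obtain ⟨η, rfl⟩ := (hasPrefix_iff _ _).1 h
  rw [← append_append]
  exact hasPrefix_append s _

lemma exists_eq_append_singleton (ξ : Seq) : ∃ b ζ, ξ = append [b] ζ :=
  ⟨ξ 0, (hasPrefix_iff _ _).1 fun i => by fin_cases i; rfl⟩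

@[simp] lemma localize_apply_append (s : List Bool) (f : Equiv.Perm Seq) (ζ : Seq) :
    localize s f (append s ζ) = append s (f ζ) := by
  simp [localize, hasPrefix_append, dropN_append]

lemma localize_apply_of_not_hasPrefix {s : List Bool} (f : Equiv.Perm Seq) {ξ : Seq}
    (h : ¬ hasPrefix s ξ) : localize s f ξ = ξ := by
  simp [localize, h]

@[simp] lemma localize_nil (f : Equiv.Perm Seq) : localize [] f = f :=
  Equiv.ext fun ξ => by simpa using localize_apply_append [] f ξ

@[simp] lemma localize_inv (s : List Bool) (f : Equiv.Perm Seq) :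
    (localize s f)⁻¹ = localize s f⁻¹ := rfl

lemma localize_mul (s : List Bool) (f g : Equiv.Perm Seq) :
    localize s (f * g) = localize s f * localize s g := by
  ext1 ξ
  by_cases h : hasPrefix s ξ
  · obtain ⟨ζ, rfl⟩ := (hasPrefix_iff _ _).1 h
    simp
  · simp [localize_apply_of_not_hasPrefix _ h]

lemma localize_apply_append_append (s t : List Bool) (f : Equiv.Perm Seq) (ζ : Seq) :
    localize s f (append (s ++ t) ζ) = append s (f (append t ζ)) := by
  rw [← append_append, localize_apply_append]

lemma localize_append (s t : List Bool) (f : Equiv.Perm Seq) :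
    localize (s ++ t) f = localize s (localize t f) := by
  ext1 ξ
  by_cases hs : hasPrefix s ξ
  · obtain ⟨ζ, rfl⟩ := (hasPrefix_iff _ _).1 hs
    by_cases ht : hasPrefix t ζ
    · obtain ⟨η, rfl⟩ := (hasPrefix_iff _ _).1 ht
      simp [localize_apply_append_append]
    · rw [localize_apply_of_not_hasPrefix _ (mt (hasPrefix_append_append_iff s t ζ).1 ht),
        localize_apply_append, localize_apply_of_not_hasPrefix _ ht]
  · rw [localize_apply_of_not_hasPrefix _ hs,
      localize_apply_of_not_hasPrefix _ (mt hasPrefix.of_append hs)]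

@[simp] lemma localize_cons_apply_append_cons (b : Bool) (s t : List Bool)
    (f : Equiv.Perm Seq) (ζ : Seq) :
    localize (b :: s) f (append (b :: t) ζ) = append [b] (localize s f (append t ζ)) := by
  rw [show b :: s = [b] ++ s from rfl, localize_append, show b :: t = [b] ++ t from rfl,
    localize_apply_append_append]

@[simp] lemma localize_cons_apply_append_cons_of_ne {a b : Bool} (h : a ≠ b) (s t : List Bool)
    (f : Equiv.Perm Seq) (ζ : Seq) :
    localize (a :: s) f (append (b :: t) ζ) = append (b :: t) ζ :=
  localize_apply_of_not_hasPrefix f fun hp => h (by simpa using (hp ⟨0, by simp⟩).symm)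

lemma mul_localize_mul_inv {g : Equiv.Perm Seq} {t t' : List Bool}
    (hg : ∀ η, g (append t η) = append t' η) (f : Equiv.Perm Seq) :
    g * localize t f * g⁻¹ = localize t' f := by
  ext1 ξ
  by_cases h : hasPrefix t' ξ
  · obtain ⟨η, rfl⟩ := (hasPrefix_iff _ _).1 h
    have hinv : g⁻¹ (append t' η) = append t η := by rw [← hg]; simp
    rw [Equiv.Perm.mul_apply, Equiv.Perm.mul_apply, hinv, localize_apply_append, hg,
      localize_apply_append]
  · have h' : ¬ hasPrefix t (g⁻¹ ξ) := fun ht => by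
      obtain ⟨η, hη⟩ := (hasPrefix_iff _ _).1 ht
      exact h ((hasPrefix_iff _ _).2 ⟨η, by rw [← hg, ← hη]; simp⟩)
    rw [Equiv.Perm.mul_apply, Equiv.Perm.mul_apply, localize_apply_of_not_hasPrefix _ h',
      localize_apply_of_not_hasPrefix _ h]
    simp

@[simp] lemma xPerm_append_false_false (u : List Bool) (ζ : Seq) :
    xPerm (append (false :: false :: u) ζ) = append (false :: u) ζ := by
  funext n; rcases n with _ | n <;> simp [xPerm, xFun]

@[simp] lemma xPerm_append_false_true (u : List Bool) (ζ : Seq) :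
    xPerm (append (false :: true :: u) ζ) = append (true :: false :: u) ζ := by
  funext n; rcases n with _ | _ | n <;> simp [xPerm, xFun]

@[simp] lemma xPerm_append_true (u : List Bool) (ζ : Seq) :
    xPerm (append (true :: u) ζ) = append (true :: true :: u) ζ := by
  funext n; rcases n with _ | _ | n <;> simp [xPerm, xFun]

@[simp] lemma yPerm_append_false_false (u : List Bool) (ζ : Seq) :
    yPerm (append (false :: false :: u) ζ) = append [false] (yPerm (append u ζ)) := by
  funext n; rcases n with _ | _ | n <;> simp [yPerm, yAux]

@[simp] lemma yPerm_append_false_true (u : List Bool) (ζ : Seq) :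
    yPerm (append (false :: true :: u) ζ) = append [true, false] (yPerm⁻¹ (append u ζ)) := by
  funext n; rcases n with _ | _ | n <;> simp [yPerm, yAux]

@[simp] lemma yPerm_append_true (u : List Bool) (ζ : Seq) :
    yPerm (append (true :: u) ζ) = append [true, true] (yPerm (append u ζ)) := by
  funext n; rcases n with _ | _ | n <;> simp [yPerm, yAux]

/- Products in `Equiv.Perm` act right to left: in the right-action notation of `M` these are
`y = x y₀ y₁₀⁻¹ y₁₁` and `x₀ x x₁ = x x`. -/
lemma yPerm_eq_split : yPerm = localize [true, true] yPerm * (localize [true, false] yPerm)⁻¹ *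
    localize [false] yPerm * xPerm := by
  ext1 ξ
  obtain ⟨a, ζ, rfl⟩ := exists_eq_append_singleton ξ
  obtain ⟨b, η, rfl⟩ := exists_eq_append_singleton ζ
  cases a <;> cases b <;> simp

lemma xPerm_thompson :
    localize [true] xPerm * xPerm * localize [false] xPerm = xPerm * xPerm := by
  ext1 ξ
  obtain ⟨a, ζ, rfl⟩ := exists_eq_append_singleton ξ
  obtain ⟨b, η, rfl⟩ := exists_eq_append_singleton ζ
  obtain ⟨c, θ, rfl⟩ := exists_eq_append_singleton η
  cases a <;> cases b <;> cases c <;> simp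

section AbelPreimage

variable {Γ : Type*} [Group Γ]

def abelPreimage (H : Subgroup Γ) (T : Subgroup (Abelianization H)) : Subgroup Γ :=
  (T.comap Abelianization.of).map H.subtype

variable {H : Subgroup Γ} {T : Subgroup (Abelianization H)}

lemma mem_abelPreimage {g : Γ} (hg : g ∈ H) :
    g ∈ abelPreimage H T ↔ Abelianization.of (⟨g, hg⟩ : H) ∈ T :=
  ⟨by rintro ⟨g', hg', rfl⟩; exact hg', fun h => ⟨⟨g, hg⟩, h, rfl⟩⟩

lemma le_normalizer_abelPreimage : H ≤ Subgroup.normalizer (abelPreimage H T) := by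
  intro g hg
  rw [Subgroup.mem_normalizer_iff]
  intro h
  by_cases hh : h ∈ H
  · rw [mem_abelPreimage hh, mem_abelPreimage (H.mul_mem (H.mul_mem hg hh) (H.inv_mem hg))]
    have hconj : (⟨g * h * g⁻¹, _⟩ : H) = ⟨g, hg⟩ * ⟨h, hh⟩ * (⟨g, hg⟩ : H)⁻¹ := rfl
    rw [hconj, map_mul, map_mul, map_inv, mul_inv_cancel_comm]
  · have hconj : g * h * g⁻¹ ∉ H := fun h' =>
      hh (by simpa [mul_assoc] using H.mul_mem (H.mul_mem (H.inv_mem hg) h') hg)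
    exact iff_of_false (fun h' => hh (Subgroup.map_subtype_le _ h'))
      (fun h' => hconj (Subgroup.map_subtype_le _ h'))

lemma eq_top_of_le_abelPreimage (h : H ≤ abelPreimage H T) : T = ⊤ :=
  eq_top_iff.2 fun a _ => QuotientGroup.induction_on a fun g => (mem_abelPreimage g.2).1 (h g.2)

end AbelPreimage

def gen (f : Equiv.Perm Seq) (s : List Bool) : M := MulOpposite.op (localize s f)

lemma gen_conj {g : Equiv.Perm Seq} {t t' : List Bool} (hg : ∀ η, g (append t η) = append t' η)
    (f : Equiv.Perm Seq) : (MulOpposite.op g)⁻¹ * gen f t * MulOpposite.op g = gen f t' := by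
  rw [gen, gen, ← mul_localize_mul_inv hg f]
  simp only [← MulOpposite.op_inv, ← MulOpposite.op_mul, mul_assoc]

lemma py_eq_split (s : List Bool) :
    py s = px s * py (s ++ [false]) * (py (s ++ [true, false]))⁻¹ * py (s ++ [true, true]) := by
  have h : localize s yPerm = localize (s ++ [true, true]) yPerm *
      (localize (s ++ [true, false]) yPerm)⁻¹ * localize (s ++ [false]) yPerm *
      localize s xPerm := by
    conv_lhs => rw [yPerm_eq_split]
    simp only [localize_mul, localize_inv, localize_append]
  simp only [py, px, h, MulOpposite.op_mul, MulOpposite.op_inv, mul_assoc]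

lemma px_thompson : px [false] * px [] * px [true] = px [] * px [] := by
  simp only [px, localize_nil, ← MulOpposite.op_mul, ← mul_assoc, xPerm_thompson]

def canonAddr (s : List Bool) : List Bool :=
  if s = [] then [] else if allFalse s then [false] else if allTrue s then [true] else [true, false]

lemma canonAddr_cons_cons_self (b : Bool) (u : List Bool) :
    canonAddr (b :: b :: u) = canonAddr (b :: u) := by
  cases b <;> simp [canonAddr, allFalse, allTrue]

lemma canonAddr_of_mem_of_mem {s : List Bool} (ht : true ∈ s) (hf : false ∈ s) :
    canonAddr s = [true, false] := by
  have hnil : s ≠ [] := List.ne_nil_of_mem ht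
  have hF : ¬ allFalse s := fun h => absurd (h _ ht) (by decide)
  have hT : ¬ allTrue s := fun h => absurd (h _ hf) (by decide)
  simp [canonAddr, hnil, hF, hT]

lemma canonAddr_eq_or (s : List Bool) : canonAddr s = [] ∨ canonAddr s = [false] ∨
    canonAddr s = [true] ∨ canonAddr s = [true, false] := by
  unfold canonAddr; split_ifs <;> simp

lemma canonAddr_of_mem_gSet {t : List Bool} (ht : t ∈ gSet) : canonAddr t = [true, false] := by
  unfold canonAddr; split_ifs <;> simp_all [gSet, allFalse, allTrue]

lemma canonAddr_of_mem_ygSet {t : List Bool} (ht : t ∈ ygSet) :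
    canonAddr t = [false] ∨ canonAddr t = [true, false] := by
  unfold canonAddr; split_ifs <;> simp_all [ygSet, allTrue]

lemma canonAddr_of_mem_gySet {t : List Bool} (ht : t ∈ gySet) :
    canonAddr t = [true] ∨ canonAddr t = [true, false] := by
  unfold canonAddr; split_ifs <;> simp_all [gySet, allFalse]

section Membership

variable {K : Subgroup M}

lemma gen_mem_iff_of_conj {g : Equiv.Perm Seq} (hg : MulOpposite.op g ∈ Subgroup.normalizer K)
    {t t' : List Bool} (hmap : ∀ η, g (append t η) = append t' η) (f : Equiv.Perm Seq) :
    gen f t ∈ K ↔ gen f t' ∈ K := by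
  rw [← gen_conj hmap f]
  exact Subgroup.mem_normalizer_iff''.1 hg _

lemma gen_append_false_false_mem_iff (hK : ∀ p, px p ∈ Subgroup.normalizer K)
    (f : Equiv.Perm Seq) (p u : List Bool) :
    gen f (p ++ false :: false :: u) ∈ K ↔ gen f (p ++ false :: u) ∈ K :=
  gen_mem_iff_of_conj (hK p) (fun η => by simp [localize_apply_append_append]) f

lemma gen_append_false_true_mem_iff (hK : ∀ p, px p ∈ Subgroup.normalizer K)
    (f : Equiv.Perm Seq) (p u : List Bool) :
    gen f (p ++ false :: true :: u) ∈ K ↔ gen f (p ++ true :: false :: u) ∈ K :=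
  gen_mem_iff_of_conj (hK p) (fun η => by simp [localize_apply_append_append]) f

lemma gen_append_true_mem_iff (hK : ∀ p, px p ∈ Subgroup.normalizer K)
    (f : Equiv.Perm Seq) (p u : List Bool) :
    gen f (p ++ true :: u) ∈ K ↔ gen f (p ++ true :: true :: u) ∈ K :=
  gen_mem_iff_of_conj (hK p) (fun η => by simp [localize_apply_append_append]) f

lemma gen_true_false_mem_iff (hK : ∀ p, px p ∈ Subgroup.normalizer K) (f : Equiv.Perm Seq) :
    ∀ u : List Bool, gen f (true :: false :: u) ∈ K ↔ gen f [true, false] ∈ K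
  | [] => Iff.rfl
  | false :: u =>
    (gen_append_false_false_mem_iff hK f [true] u).trans (gen_true_false_mem_iff hK f u)
  | true :: u =>
    (gen_append_false_true_mem_iff hK f [true] u).trans <|
      (gen_append_true_mem_iff hK f [] (false :: u)).symm.trans (gen_true_false_mem_iff hK f u)

theorem gen_mem_iff_canonAddr (hK : ∀ p, px p ∈ Subgroup.normalizer K) (f : Equiv.Perm Seq) :
    ∀ s : List Bool, gen f s ∈ K ↔ gen f (canonAddr s) ∈ K
  | [] => by simp [canonAddr]
  | [b] => by cases b <;> simp [canonAddr, allFalse, allTrue]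
  | false :: false :: u => by
    rw [canonAddr_cons_cons_self]
    exact (gen_append_false_false_mem_iff hK f [] u).trans
      (gen_mem_iff_canonAddr hK f (false :: u))
  | true :: true :: u => by
    rw [canonAddr_cons_cons_self]
    exact (gen_append_true_mem_iff hK f [] u).symm.trans (gen_mem_iff_canonAddr hK f (true :: u))
  | false :: true :: u => by
    rw [canonAddr_of_mem_of_mem (by simp) (by simp)]
    exact (gen_append_false_true_mem_iff hK f [] u).trans (gen_true_false_mem_iff hK f u)
  | true :: false :: u => by
    rw [canonAddr_of_mem_of_mem (by simp) (by simp)]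
    exact gen_true_false_mem_iff hK f u

lemma gen_mem_of_canonAddr_eq (hK : ∀ p, px p ∈ Subgroup.normalizer K) (f : Equiv.Perm Seq)
    {s c : List Bool} (hc : gen f c ∈ K) (hs : canonAddr s = c) : gen f s ∈ K :=
  (gen_mem_iff_canonAddr hK f s).2 (hs ▸ hc)

lemma px_mem_of_py_mem {s : List Bool} (hy : py s ∈ K) (hy₀ : py (s ++ [false]) ∈ K)
    (hy₁₀ : py (s ++ [true, false]) ∈ K) (hy₁₁ : py (s ++ [true, true]) ∈ K) : px s ∈ K := by
  have e : px s = py s * (py (s ++ [true, true]))⁻¹ * py (s ++ [true, false]) *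
      (py (s ++ [false]))⁻¹ := by
    rw [py_eq_split s]; group
  rw [e]
  exact mul_mem (mul_mem (mul_mem hy (inv_mem hy₁₁)) hy₁₀) (inv_mem hy₀)

lemma px_false_mem_of_py (hK : ∀ p, px p ∈ Subgroup.normalizer K) (hy₀ : py [false] ∈ K)
    (hy₁₀ : py [true, false] ∈ K) : px [false] ∈ K :=
  px_mem_of_py_mem hy₀ (gen_mem_of_canonAddr_eq hK yPerm hy₀ (by decide))
    (gen_mem_of_canonAddr_eq hK yPerm hy₁₀ (by decide))
    (gen_mem_of_canonAddr_eq hK yPerm hy₁₀ (by decide))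

lemma px_true_mem_of_py (hK : ∀ p, px p ∈ Subgroup.normalizer K) (hy₁ : py [true] ∈ K)
    (hy₁₀ : py [true, false] ∈ K) : px [true] ∈ K :=
  px_mem_of_py_mem hy₁ hy₁₀ (gen_mem_of_canonAddr_eq hK yPerm hy₁₀ (by decide))
    (gen_mem_of_canonAddr_eq hK yPerm hy₁ (by decide))

lemma px_nil_mem (hK : px [] ∈ Subgroup.normalizer K) (hx₀ : px [false] ∈ K)
    (hx₁ : px [true] ∈ K) : px [] ∈ K := by
  have e : px [] = (px [])⁻¹ * px [false] * px [] * px [true] := by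
    calc px [] = (px [])⁻¹ * (px [] * px []) := by group
      _ = (px [])⁻¹ * (px [false] * px [] * px [true]) := by rw [px_thompson]
      _ = (px [])⁻¹ * px [false] * px [] * px [true] := by group
  rw [e]
  exact mul_mem ((Subgroup.mem_normalizer_iff''.1 hK _).1 hx₀) hx₁

lemma py_nil_mem (hK : ∀ p, px p ∈ Subgroup.normalizer K) (hx : px [] ∈ K)
    (hy₀ : py [false] ∈ K) (hy₁ : py [true] ∈ K) (hy₁₀ : py [true, false] ∈ K) : py [] ∈ K := by
  rw [py_eq_split]
  exact mul_mem (mul_mem (mul_mem hx hy₀) (inv_mem hy₁₀))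
    (gen_mem_of_canonAddr_eq hK yPerm hy₁ (by decide))

theorem px_mem_of_mem_gens (hK : ∀ p, px p ∈ Subgroup.normalizer K) (hx₀ : px [false] ∈ K)
    (hx₁ : px [true] ∈ K) (hy₁₀ : py [true, false] ∈ K) (s : List Bool) : px s ∈ K := by
  have hx₁₀ : px [true, false] ∈ K :=
    px_mem_of_py_mem hy₁₀ (gen_mem_of_canonAddr_eq hK yPerm hy₁₀ (by decide))
      (gen_mem_of_canonAddr_eq hK yPerm hy₁₀ (by decide))
      (gen_mem_of_canonAddr_eq hK yPerm hy₁₀ (by decide))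
  rcases canonAddr_eq_or s with h | h | h | h <;> refine gen_mem_of_canonAddr_eq hK xPerm ?_ h
  exacts [px_nil_mem (hK []) hx₀ hx₁, hx₀, hx₁, hx₁₀]

theorem LM_le_of_mem {A : Set (List Bool)} (hK : LM A ≤ Subgroup.normalizer K)
    (hx₀ : px [false] ∈ K) (hx₁ : px [true] ∈ K) (hy₁₀ : py [true, false] ∈ K)
    (hy : ∀ t ∈ A, py (canonAddr t) ∈ K) : LM A ≤ K := by
  have hK' : ∀ p, px p ∈ Subgroup.normalizer K := fun p => hK (px_mem A p)
  refine (Subgroup.closure_le _).2 (Set.union_subset ?_ ?_)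
  · exact Set.range_subset_iff.2 (px_mem_of_mem_gens hK' hx₀ hx₁ hy₁₀)
  · exact Set.image_subset_iff.2 fun t ht => gen_mem_of_canonAddr_eq hK' yPerm (hy t ht) rfl

theorem G_le_of_mem (hK : G ≤ Subgroup.normalizer K) (hx₀ : px [false] ∈ K)
    (hx₁ : px [true] ∈ K) (hy₁₀ : py [true, false] ∈ K) : G ≤ K :=
  LM_le_of_mem hK hx₀ hx₁ hy₁₀ fun _ ht => canonAddr_of_mem_gSet ht ▸ hy₁₀

theorem yG_le_of_mem (hK : yG ≤ Subgroup.normalizer K) (hy₀ : py [false] ∈ K)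
    (hx₁ : px [true] ∈ K) (hy₁₀ : py [true, false] ∈ K) : yG ≤ K :=
  LM_le_of_mem hK (px_false_mem_of_py (fun p => hK (px_mem _ p)) hy₀ hy₁₀) hx₁ hy₁₀
    fun _ ht => by rcases canonAddr_of_mem_ygSet ht with h | h <;> rw [h] <;> assumption

theorem Gy_le_of_mem (hK : Gy ≤ Subgroup.normalizer K) (hx₀ : px [false] ∈ K)
    (hy₁ : py [true] ∈ K) (hy₁₀ : py [true, false] ∈ K) : Gy ≤ K :=
  LM_le_of_mem hK hx₀ (px_true_mem_of_py (fun p => hK (px_mem _ p)) hy₁ hy₁₀) hy₁₀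
    fun _ ht => by rcases canonAddr_of_mem_gySet ht with h | h <;> rw [h] <;> assumption

theorem yGy_le_of_mem (hK : yGy ≤ Subgroup.normalizer K) (hy₀ : py [false] ∈ K)
    (hy₁ : py [true] ∈ K) (hy₁₀ : py [true, false] ∈ K) : yGy ≤ K := by
  have hK' : ∀ p, px p ∈ Subgroup.normalizer K := fun p => hK (px_mem _ p)
  have hx₀ := px_false_mem_of_py hK' hy₀ hy₁₀
  have hx₁ := px_true_mem_of_py hK' hy₁ hy₁₀
  have hy : py [] ∈ K :=
    py_nil_mem hK' (px_mem_of_mem_gens hK' hx₀ hx₁ hy₁₀ []) hy₀ hy₁ hy₁₀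
  refine LM_le_of_mem hK hx₀ hx₁ hy₁₀ fun t _ => ?_
  rcases canonAddr_eq_or t with h | h | h | h <;> rw [h] <;> assumption

end Membership

/-- `G^{ab}` is generated by the images of `x₀, x₁, y₁₀`; `yG^{ab}` by those of
`y₀, x₁, y₁₀`; `G_y^{ab}` by those of `x₀, y₁, y₁₀`; `yGy^{ab}` by those of
`y₀, y₁, y₁₀`. -/
theorem abelianization_generators :
    Subgroup.closure
      {Abelianization.of (⟨px [false], px_mem gSet _⟩ : ↥G),
       Abelianization.of (⟨px [true], px_mem gSet _⟩ : ↥G),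
       Abelianization.of (⟨py [true, false], py_mem mem10_g⟩ : ↥G)} = ⊤ ∧
    Subgroup.closure
      {Abelianization.of (⟨py [false], py_mem mem0_yg⟩ : ↥yG),
       Abelianization.of (⟨px [true], px_mem ygSet _⟩ : ↥yG),
       Abelianization.of (⟨py [true, false], py_mem mem10_yg⟩ : ↥yG)} = ⊤ ∧
    Subgroup.closure
      {Abelianization.of (⟨px [false], px_mem gySet _⟩ : ↥Gy),
       Abelianization.of (⟨py [true], py_mem mem1_gy⟩ : ↥Gy),
       Abelianization.of (⟨py [true, false], py_mem mem10_gy⟩ : ↥Gy)} = ⊤ ∧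
    Subgroup.closure
      {Abelianization.of (⟨py [false], py_mem (mem_ygy _)⟩ : ↥yGy),
       Abelianization.of (⟨py [true], py_mem (mem_ygy _)⟩ : ↥yGy),
       Abelianization.of (⟨py [true, false], py_mem (mem_ygy _)⟩ : ↥yGy)} = ⊤ := by
  refine ⟨eq_top_of_le_abelPreimage (G_le_of_mem ?_ ?_ ?_ ?_),
    eq_top_of_le_abelPreimage (yG_le_of_mem ?_ ?_ ?_ ?_),
    eq_top_of_le_abelPreimage (Gy_le_of_mem ?_ ?_ ?_ ?_),
    eq_top_of_le_abelPreimage (yGy_le_of_mem ?_ ?_ ?_ ?_)⟩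
  all_goals first
    | exact le_normalizer_abelPreimage
    | exact (mem_abelPreimage _).2 (Subgroup.subset_closure (Set.mem_insert _ _))
    | exact (mem_abelPreimage _).2
        (Subgroup.subset_closure (Set.mem_insert_of_mem _ (Set.mem_insert _ _)))
    | exact (mem_abelPreimage _).2
        (Subgroup.subset_closure (Set.mem_insert_of_mem _ (Set.mem_insert_of_mem _ rfl)))

end LodhaMoore
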